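/- Let k be an infinite field, n ≥ 1, and f ∈ k[X₁,…,X_n] a polynomial, and fix h ∈ kⁿ. Then f has total degree ≤ n₀ if and only if for every X ∈ kⁿ, the univariate polynomial t ↦ f(h + tX) in k[t] has degree ≤ n₀. -/

import Mathlib

/-
Expanding `f(h + tX)` monomial by monomial, a monomial `X^s` contributes a polynomial in `t`
of degree at most `|s|`, whose coefficient of `t^|s|` is `X^s` itself. Hence `f(h + tX)` has
degree at most `deg f`, and its coefficient of `t^(deg f)` is the top homogeneous component of
`f` evaluated at the direction `X`. That component is a nonzero polynomial when `f ≠ 0`, so over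
an infinite field some direction `X` does not annihilate it, and along that direction the
degree `deg f` is attained.
-/

open Polynomial

theorem Polynomial.coeff_prod_sum_of_natDegree_le {R ι : Type*} [CommSemiring R]
    (s : Finset ι) (f : ι → R[X]) (d : ι → ℕ) (h : ∀ i ∈ s, (f i).natDegree ≤ d i) :
    (∏ i ∈ s, f i).coeff (∑ i ∈ s, d i) = ∏ i ∈ s, (f i).coeff (d i) := by
  classical
  induction s using Finset.induction with
  | empty => simp
  | insert a s ha ih =>
    have hs : ∀ i ∈ s, (f i).natDegree ≤ d i := fun i hi => h i (Finset.mem_insert_of_mem hi)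
    rw [Finset.prod_insert ha, Finset.sum_insert ha, Finset.prod_insert ha,
      coeff_mul_add_eq_of_natDegree_le (h a (Finset.mem_insert_self a s))
        ((natDegree_prod_le _ _).trans (Finset.sum_le_sum hs)), ih hs]

theorem Polynomial.natDegree_C_add_X_mul_C_le {R : Type*} [Semiring R] (a b : R) :
    (C a + X * C b).natDegree ≤ 1 := by
  compute_degree

theorem Polynomial.coeff_C_add_X_mul_C_one {R : Type*} [Semiring R] (a b : R) :
    (C a + X * C b).coeff 1 = b := by
  simp

namespace MvPolynomial

section CommSemiring

variable {R σ : Type*} [CommSemiring R]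

theorem exists_mem_support_degree_eq_totalDegree {f : MvPolynomial σ R} (hf : f ≠ 0) :
    ∃ s ∈ f.support, s.degree = f.totalDegree := by
  obtain ⟨s, hs, hsup⟩ := Finset.exists_mem_eq_sup f.support (support_nonempty.mpr hf)
    fun s => s.sum fun _ e => e
  exact ⟨s, hs, hsup.symm⟩

theorem homogeneousComponent_totalDegree_ne_zero {f : MvPolynomial σ R} (hf : f ≠ 0) :
    homogeneousComponent f.totalDegree f ≠ 0 := by
  obtain ⟨s, hs, hdeg⟩ := exists_mem_support_degree_eq_totalDegree hf
  intro h0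
  have hcoeff := coeff_homogeneousComponent f.totalDegree f s
  rw [h0, if_pos hdeg, coeff_zero] at hcoeff
  exact mem_support_iff.mp hs hcoeff.symm

variable {p : σ → R[X]}

theorem natDegree_prod_pow_le_degree (hp : ∀ i, (p i).natDegree ≤ 1) (s : σ →₀ ℕ) :
    (∏ i ∈ s.support, p i ^ s i).natDegree ≤ s.degree :=
  (natDegree_prod_le _ _).trans <| Finset.sum_le_sum fun i _ =>
    (natDegree_pow_le_of_le (s i) (hp i)).trans_eq (mul_one _)

theorem coeff_prod_pow_degree (hp : ∀ i, (p i).natDegree ≤ 1) (s : σ →₀ ℕ) :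
    (∏ i ∈ s.support, p i ^ s i).coeff s.degree = ∏ i ∈ s.support, (p i).coeff 1 ^ s i := by
  have hpow (i : σ) : (p i ^ s i).natDegree ≤ s i :=
    (natDegree_pow_le_of_le (s i) (hp i)).trans_eq (mul_one _)
  rw [Finsupp.degree_apply, coeff_prod_sum_of_natDegree_le _ _ _ fun i _ => hpow i]
  refine Finset.prod_congr rfl fun i _ => ?_
  simpa using coeff_pow_of_natDegree_le (m := s i) (hp i)

theorem natDegree_aeval_le_totalDegree (hp : ∀ i, (p i).natDegree ≤ 1)
    (f : MvPolynomial σ R) : (aeval p f).natDegree ≤ f.totalDegree := by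
  rw [aeval_def, eval₂_eq]
  refine natDegree_sum_le_of_forall_le _ _ fun s hs => ?_
  exact (natDegree_C_mul_le _ _).trans <|
    (natDegree_prod_pow_le_degree hp s).trans (le_totalDegree hs)

theorem coeff_aeval_eq_eval_homogeneousComponent (hp : ∀ i, (p i).natDegree ≤ 1)
    (f : MvPolynomial σ R) {d : ℕ} (hd : f.totalDegree ≤ d) :
    (aeval p f).coeff d = eval (fun i => (p i).coeff 1) (homogeneousComponent d f) := by
  classical
  rw [aeval_def, eval₂_eq, finsetSum_coeff, homogeneousComponent_apply, map_sum,
    Finset.sum_filter]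
  refine Finset.sum_congr rfl fun s hs => ?_
  rw [Polynomial.algebraMap_eq, Polynomial.coeff_C_mul, eval_monomial, Finsupp.prod]
  split_ifs with hsd
  · rw [← hsd, coeff_prod_pow_degree hp]
  · have hlt : s.degree < d := ((le_totalDegree hs).trans hd).lt_of_ne hsd
    rw [coeff_eq_zero_of_natDegree_lt ((natDegree_prod_pow_le_degree hp s).trans_lt hlt),
      mul_zero]

end CommSemiring

theorem exists_natDegree_aeval_line_eq_totalDegree {R σ : Type*} [CommRing R] [IsDomain R]
    [Infinite R] {f : MvPolynomial σ R} (hf : f ≠ 0) (h : σ → R) :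
    ∃ v : σ → R, (aeval (fun i => Polynomial.C (h i) + Polynomial.X * Polynomial.C (v i)) f).natDegree = f.totalDegree := by
  obtain ⟨v, hv⟩ : ∃ v, eval v (homogeneousComponent f.totalDegree f) ≠ 0 := by
    by_contra! h0
    exact homogeneousComponent_totalDegree_ne_zero hf (funext fun v => by simp [h0 v])
  have hline (i : σ) := natDegree_C_add_X_mul_C_le (h i) (v i)
  refine ⟨v, natDegree_eq_of_le_of_coeff_ne_zero (natDegree_aeval_le_totalDegree hline f) ?_⟩
  simpa only [coeff_aeval_eq_eval_homogeneousComponent hline f le_rfl,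
    coeff_C_add_X_mul_C_one] using hv

end MvPolynomial

theorem stmt_5_general (k : Type*) [Field k] [Infinite k] (n : ℕ)
    (f : MvPolynomial (Fin n) k) (h : Fin n → k) (n₀ : ℕ) :
    f.totalDegree ≤ n₀ ↔
      ∀ X : Fin n → k,
        (MvPolynomial.aeval
            (fun i => Polynomial.C (h i) + Polynomial.X * Polynomial.C (X i)) f
          : Polynomial k).degree ≤ (n₀ : ℕ) := by
  constructor
  · intro hf v
    exact degree_le_of_natDegree_le <| (MvPolynomial.natDegree_aeval_le_totalDegree
      (fun i => natDegree_C_add_X_mul_C_le (h i) (v i)) f).trans hf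
  · intro hdeg
    rcases eq_or_ne f 0 with rfl | hf
    · simp
    obtain ⟨v, hv⟩ := MvPolynomial.exists_natDegree_aeval_line_eq_totalDegree hf h
    rw [← hv]
    exact natDegree_le_iff_degree_le.mpr (hdeg v)

/-- over an infinite field `k`, a polynomial `f ∈ k[X₁,…,X_n]` has total
degree `≤ n₀` iff for every direction `X ∈ kⁿ` the univariate polynomial
`t ↦ f(h + tX)` has degree `≤ n₀` (for a fixed base point `h ∈ kⁿ`). -/
theorem stmt_5 (k : Type*) [Field k] [Infinite k] (n : ℕ) (hn : 1 ≤ n)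
    (f : MvPolynomial (Fin n) k) (h : Fin n → k) (n₀ : ℕ) :
    f.totalDegree ≤ n₀ ↔
      ∀ X : Fin n → k,
        (MvPolynomial.aeval
            (fun i => Polynomial.C (h i) + Polynomial.X * Polynomial.C (X i)) f
          : Polynomial k).degree ≤ (n₀ : ℕ) :=
  stmt_5_general k n f h n₀
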